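/- Let n ≥ 1, let f, g : [n] → [n] be functions, and let σ be a permutation of [n] that minimizes d(f, σ) over all permutations of [n]. Then d(g∘f, id) ≥ max{ d(g, σ⁻¹) − d(f, σ), d(f, σ) } ≥ (1/2)·d(g, σ⁻¹), where d is the normalized Hamming distance between functions and id is the identity function. -/

import Mathlib

/-!
On the set where `g ∘ f = id` the map `f` is injective, so it extends to a permutation `τ` that
differs from `f` only where `g ∘ f ≠ id`; minimality of `σ` then gives `d(f, σ) ≤ d(g ∘ f, id)`.
Reindexing by `σ` and the triangle inequality give
`d(g, σ⁻¹) = d(g ∘ σ, id) ≤ d(g ∘ σ, g ∘ f) + d(g ∘ f, id) ≤ d(σ, f) + d(g ∘ f, id)`.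
The last bound holds because a maximum dominates the average of its two arguments.
-/

/-- Normalized Hamming distance between functions `[n] → [n]`. -/
noncomputable def nhdist {n : ℕ} {α : Type*} [DecidableEq α] (x y : Fin n → α) : ℝ :=
  (hammingDist x y : ℝ) / n

open Function Set

theorem hammingDist_comp_equiv {ι ι' β : Type*} [Fintype ι] [Fintype ι'] [DecidableEq β]
    (e : ι' ≃ ι) (x y : ι → β) : hammingDist (x ∘ e) (y ∘ e) = hammingDist x y := by
  simp only [hammingDist]
  exact Finset.card_equiv e (by simp)

theorem Set.InjOn.exists_perm_eqOn {α : Type*} [Finite α] {f : α → α} {s : Set α}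
    (hf : InjOn f s) : ∃ τ : Equiv.Perm α, EqOn τ f s := by
  classical
  exact ⟨(hf.bijOn_image.equiv f).extendSubtype, fun x hx =>
    Equiv.extendSubtype_apply_of_mem _ x hx⟩

section

variable {α : Type*} [Fintype α] [DecidableEq α]

theorem exists_perm_hammingDist_le_hammingDist_comp_id (f g : α → α) :
    ∃ τ : Equiv.Perm α, hammingDist f τ ≤ hammingDist (g ∘ f) id := by
  have hinj : InjOn f {i | g (f i) = i} := fun i hi j hj h => by
    rw [← hi.out, ← hj.out, h]
  obtain ⟨τ, hτ⟩ := hinj.exists_perm_eqOn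
  refine ⟨τ, Finset.card_le_card fun i => ?_⟩
  simp only [Finset.mem_filter, Finset.mem_univ, true_and]
  exact mt fun h => (hτ h).symm

theorem hammingDist_symm_le_add (σ : Equiv.Perm α) (f g : α → α) :
    hammingDist g σ.symm ≤ hammingDist f σ + hammingDist (g ∘ f) id :=
  calc hammingDist g σ.symm = hammingDist (g ∘ σ) id := by
        rw [← hammingDist_comp_equiv σ, Equiv.symm_comp_self]
    _ ≤ hammingDist (g ∘ σ) (g ∘ f) + hammingDist (g ∘ f) id := hammingDist_triangle _ _ _
    _ ≤ hammingDist f σ + hammingDist (g ∘ f) id := by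
        gcongr
        rw [hammingDist_comm]
        exact hammingDist_comp_le_hammingDist fun _ => g

end

theorem nhdist_le_nhdist_of_hammingDist_le {n : ℕ} {β γ : Type*}
    [DecidableEq β] [DecidableEq γ]
    {x y : Fin n → β} {u v : Fin n → γ} (h : hammingDist x y ≤ hammingDist u v) :
    nhdist x y ≤ nhdist u v :=
  div_le_div_of_nonneg_right (by exact_mod_cast h) n.cast_nonneg

theorem nhdist_le_add_of_hammingDist_le_add {n : ℕ} {β γ δ : Type*}
    [DecidableEq β] [DecidableEq γ] [DecidableEq δ]
    {x y : Fin n → β} {u v : Fin n → γ} {w z : Fin n → δ}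
    (h : hammingDist x y ≤ hammingDist u v + hammingDist w z) :
    nhdist x y ≤ nhdist u v + nhdist w z := by
  rw [nhdist, nhdist, nhdist, ← add_div]
  exact div_le_div_of_nonneg_right (by exact_mod_cast h) n.cast_nonneg

theorem dist_comp_id_ge_half_general (n : ℕ) (f g : Fin n → Fin n)
    (σ : Equiv.Perm (Fin n))
    (hσ : ∀ τ : Equiv.Perm (Fin n), nhdist f ⇑σ ≤ nhdist f ⇑τ) :
    max (nhdist g ⇑σ.symm - nhdist f ⇑σ) (nhdist f ⇑σ) ≤ nhdist (fun i => g (f i)) id ∧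
    (1 / 2) * nhdist g ⇑σ.symm
      ≤ max (nhdist g ⇑σ.symm - nhdist f ⇑σ) (nhdist f ⇑σ) := by
  have hf : nhdist f σ ≤ nhdist (fun i => g (f i)) id := by
    obtain ⟨τ, hτ⟩ := exists_perm_hammingDist_le_hammingDist_comp_id f g
    exact (hσ τ).trans (nhdist_le_nhdist_of_hammingDist_le hτ)
  have hg : nhdist g σ.symm ≤ nhdist f σ + nhdist (fun i => g (f i)) id :=
    nhdist_le_add_of_hammingDist_le_add (hammingDist_symm_le_add σ f g)
  refine ⟨max_le (by linarith) hf, ?_⟩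
  linarith [le_max_left (nhdist g σ.symm - nhdist f σ) (nhdist f σ),
    le_max_right (nhdist g σ.symm - nhdist f σ) (nhdist f σ)]

/-- If `σ` is a permutation of `[n]` that is closest to `f` among all permutations, then
`d(g∘f, id) ≥ max{d(g,σ⁻¹) − d(f,σ), d(f,σ)} ≥ (1/2)·d(g,σ⁻¹)`. -/
theorem dist_comp_id_ge_half (n : ℕ) (hn : 1 ≤ n) (f g : Fin n → Fin n)
    (σ : Equiv.Perm (Fin n))
    (hσ : ∀ τ : Equiv.Perm (Fin n), nhdist f ⇑σ ≤ nhdist f ⇑τ) :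
    max (nhdist g ⇑σ.symm - nhdist f ⇑σ) (nhdist f ⇑σ) ≤ nhdist (fun i => g (f i)) id ∧
    (1 / 2) * nhdist g ⇑σ.symm
      ≤ max (nhdist g ⇑σ.symm - nhdist f ⇑σ) (nhdist f ⇑σ) :=
  dist_comp_id_ge_half_general n f g σ hσ
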